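/- Let Y be uniform on [-D_y/2, D_y/2] with D_y > 0, h > 0, 0 < L < 2h, ρ > 0, ε > 0, and χ = ρ/ε. If (h^2 - L^2/4)^2 + h^2 L^2 ≤ χ and (D_y^2/4 + h^2 - L^2/4)^2 + h^2 L^2 ≥ χ, then P( ρ / ((Y^2 + h^2 - L^2/4)^2 + h^2 L^2) < ε ) = 1 - (2/D_y)·sqrt( sqrt(χ - h^2 L^2) + L^2/4 - h^2 ). -/

import Mathlib

open MeasureTheory

set_option maxHeartbeats 1000000 in
/-- Lossless-waveguide outage probability for Y uniform on [-D_y/2, D_y/2]. -/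
theorem stmt_16 (Dy h L ρ ε : ℝ) (hDy : 0 < Dy) (hh : 0 < h) (hL0 : 0 < L)
    (hL : L < 2 * h) (hρ : 0 < ρ) (hε : 0 < ε)
    (h1 : (h ^ 2 - L ^ 2 / 4) ^ 2 + h ^ 2 * L ^ 2 ≤ ρ / ε)
    (h2 : ρ / ε ≤ (Dy ^ 2 / 4 + h ^ 2 - L ^ 2 / 4) ^ 2 + h ^ 2 * L ^ 2) :
    ((ENNReal.ofReal Dy)⁻¹ • volume.restrict (Set.Icc (-(Dy / 2)) (Dy / 2)))
        {y : ℝ | ρ / ((y ^ 2 + h ^ 2 - L ^ 2 / 4) ^ 2 + h ^ 2 * L ^ 2) < ε} =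
      ENNReal.ofReal
        (1 - 2 / Dy *
          Real.sqrt (Real.sqrt (ρ / ε - h ^ 2 * L ^ 2) + L ^ 2 / 4 - h ^ 2)) := by
  have hA : 0 < h ^ 2 - L ^ 2 / 4 := by nlinarith
  set χ := ρ / ε with hχ
  have hρχ : ρ = χ * ε := by rw [hχ, div_mul_cancel₀ ρ hε.ne']
  have hs0' : 0 ≤ χ - h ^ 2 * L ^ 2 := by nlinarith [sq_nonneg (h ^ 2 - L ^ 2 / 4)]
  set s := Real.sqrt (χ - h ^ 2 * L ^ 2) with hs
  have hssq : s ^ 2 = χ - h ^ 2 * L ^ 2 := Real.sq_sqrt hs0'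
  have hsnn : 0 ≤ s := Real.sqrt_nonneg _
  have hsge : h ^ 2 - L ^ 2 / 4 ≤ s := by nlinarith
  have hcin : 0 ≤ s + L ^ 2 / 4 - h ^ 2 := by linarith
  set c := Real.sqrt (s + L ^ 2 / 4 - h ^ 2) with hc
  have hcsq : c ^ 2 = s + L ^ 2 / 4 - h ^ 2 := Real.sq_sqrt hcin
  have hcnn : 0 ≤ c := Real.sqrt_nonneg _
  have hsle : s ≤ Dy ^ 2 / 4 + h ^ 2 - L ^ 2 / 4 := by nlinarith [sq_nonneg Dy]
  have hcle : c ≤ Dy / 2 := by nlinarith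
  have hf : ∀ y : ℝ, 0 < (y ^ 2 + h ^ 2 - L ^ 2 / 4) ^ 2 + h ^ 2 * L ^ 2 := by
    intro y; positivity
  have key : ∀ y : ℝ,
      ρ / ((y ^ 2 + h ^ 2 - L ^ 2 / 4) ^ 2 + h ^ 2 * L ^ 2) < ε ↔ c ^ 2 < y ^ 2 := by
    intro y
    rw [div_lt_iff₀ (hf y)]
    have hApos : 0 < y ^ 2 + h ^ 2 - L ^ 2 / 4 := by nlinarith [sq_nonneg y]
    have hρχ' : ρ = ε * χ := by rw [hρχ]; ring
    constructor
    · intro hy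
      have hχf : χ < (y ^ 2 + h ^ 2 - L ^ 2 / 4) ^ 2 + h ^ 2 * L ^ 2 :=
        lt_of_mul_lt_mul_left (by linarith) hε.le
      have hsA : s < y ^ 2 + h ^ 2 - L ^ 2 / 4 := by
        by_contra hcon
        push_neg at hcon
        have := pow_le_pow_left₀ hApos.le hcon 2
        linarith
      linarith
    · intro hy
      have hsA : s < y ^ 2 + h ^ 2 - L ^ 2 / 4 := by linarith
      have hχf : χ < (y ^ 2 + h ^ 2 - L ^ 2 / 4) ^ 2 + h ^ 2 * L ^ 2 := by
        have := pow_lt_pow_left₀ hsA hsnn (n := 2) two_ne_zero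
        linarith
      have := mul_lt_mul_of_pos_left hχf hε
      linarith
  have hset : {y : ℝ | ρ / ((y ^ 2 + h ^ 2 - L ^ 2 / 4) ^ 2 + h ^ 2 * L ^ 2) < ε} ∩
      Set.Icc (-(Dy / 2)) (Dy / 2) =
      Set.Icc (-(Dy / 2)) (Dy / 2) \ Set.Icc (-c) c := by
    ext y
    simp only [Set.mem_inter_iff, Set.mem_setOf_eq, Set.mem_diff, Set.mem_Icc, key y]
    constructor
    · rintro ⟨hy, hI⟩
      refine ⟨hI, fun hmem => ?_⟩
      nlinarith [hmem.1, hmem.2]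
    · rintro ⟨hI, hy⟩
      refine ⟨?_, hI⟩
      rcases le_or_gt y 0 with h0 | h0
      · have : y < -c := by
          by_contra hcon
          push_neg at hcon
          exact hy ⟨hcon, by linarith⟩
        nlinarith
      · have : c < y := by
          by_contra hcon
          push_neg at hcon
          exact hy ⟨by linarith, hcon⟩
        nlinarith
  have hmeas : MeasurableSet
      {y : ℝ | ρ / ((y ^ 2 + h ^ 2 - L ^ 2 / 4) ^ 2 + h ^ 2 * L ^ 2) < ε} := by
    apply measurableSet_lt _ measurable_const
    fun_prop
  rw [Measure.smul_apply, Measure.restrict_apply hmeas, hset,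
    measure_diff (Set.Icc_subset_Icc (by linarith) hcle)
      measurableSet_Icc.nullMeasurableSet measure_Icc_lt_top.ne,
    Real.volume_Icc, Real.volume_Icc]
  have e1 : Dy / 2 - -(Dy / 2) = Dy := by ring
  have e2 : c - -c = 2 * c := by ring
  rw [e1, e2, ← ENNReal.ofReal_sub _ (by positivity : (0:ℝ) ≤ 2 * c), smul_eq_mul]
  have e3 : 1 - 2 / Dy * c = (Dy - 2 * c) / Dy := by field_simp
  rw [e3, ENNReal.ofReal_div_of_pos hDy]
  exact ENNReal.div_eq_inv_mul.symm
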